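/- arXiv:2007.03462 — 2 statements merged into one kernel-verified Lean document; each statement's English description precedes it below -/
import Mathlib

section
/- Consider K users with local loss functions F_k : ℝ^d → ℝ (k = 1,…,K), each twice differentiable, γ-strongly convex, and with L-Lipschitz gradient (0 < γ ≤ L), and let F(w) = (1/K)·∑_{k=1}^K F_k(w) with minimizer w*. Fix ξ with 0 < ξ ≤ γ/L and a local accuracy η ∈ [0,1). For each global iterate w^{(n)} define G_k(w^{(n)}, h) = F_k(w^{(n)} + h) − ⟨∇F_k(w^{(n)}) − ξ·∇F(w^{(n)}), h⟩, and suppose the iterates satisfy w^{(n+1)} = w^{(n)} + (1/K)·∑_{k=1}^K h_k^{(n)}, where each h_k^{(n)} is an η-approximate minimizer of G_k(w^{(n)}, ·), i.e. G_k(w^{(n)}, h_k^{(n)}) − inf_h G_k(w^{(n)}, h) ≤ η·(G_k(w^{(n)}, 0) − inf_h G_k(w^{(n)}, h)). Then for every ε ∈ (0,1) and every n ≥ (2L²/(γ²ξ(1−η)))·ln(1/ε), one has F(w^{(n)}) − F(w*) ≤ ε·(F(w^{(0)}) − F(w*)). -/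
/-!
Strong convexity of `F k` bounds the local surrogate `G_k(w, ·)` from below by
`F k w + ξ ⟪∇F w, h⟫ + γ/2 ‖h‖²`, and `L`-smoothness at `h = -(ξ/L) ∇F w` bounds its infimum from
above by `F k w - ξ² ‖∇F w‖² / (2L)`. Hence an `η`-approximate minimiser `h_k` satisfies
`ξ ⟪∇F w, h_k⟫ + γ/2 ‖h_k‖² ≤ -(1 - η) ξ² ‖∇F w‖² / (2L)`. Averaging over the users with the descent
lemma for the `L`-smooth `F`, Jensen for `‖·‖²` and `ξ L ≤ γ` gives
`F w⁺ ≤ F w - (1 - η) ξ ‖∇F w‖² / (2L)`, and the Polyak–Łojasiewicz inequality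
`‖∇F w‖² ≥ 2γ (F w - F w*)` turns this into a contraction of the optimality gap by the factor
`1 - (1 - η) ξ γ / L ≤ exp (-(1 - η) ξ γ / L)`. The prescribed `n` is `2L/γ ≥ 1` times the number of
steps this needs to reach `ε`.
-/

open scoped RealInnerProductSpace Gradient

section NormedSpace
variable {E : Type*} [NormedAddCommGroup E] [NormedSpace ℝ E]

theorem hasDerivAt_apply_add_smul {f : E → ℝ} {f' : E →L[ℝ] ℝ} {x v : E} {t : ℝ}
    (hf : HasFDerivAt f f' (x + t • v)) :
    HasDerivAt (fun s : ℝ => f (x + s • v)) (f' v) t := by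
  have hline : HasDerivAt (fun s : ℝ => x + s • v) v t := by
    simpa using ((hasDerivAt_id t).smul_const v).const_add x
  exact hf.comp_hasDerivAt t hline

theorem ConvexOn.add_le_of_hasFDerivAt {φ : E → ℝ} {φ' : E →L[ℝ] ℝ} {x : E}
    (hφ : ConvexOn ℝ Set.univ φ) (hx : HasFDerivAt φ φ' x) (v : E) :
    φ x + φ' v ≤ φ (x + v) := by
  have hline : ConvexOn ℝ Set.univ (fun t : ℝ => φ (x + t • v)) :=
    (hφ.translate_right x).comp_linearMap (LinearMap.toSpanSingleton ℝ E v)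
  have hslope := hline.le_slope_of_hasDerivAt (Set.mem_univ 0) (Set.mem_univ 1) zero_lt_one
    (hasDerivAt_apply_add_smul (by simpa using hx))
  simp only [slope_def_field, zero_smul, add_zero, one_smul, sub_zero, div_one] at hslope
  linarith

end NormedSpace

theorem neg_norm_sq_div_le_inner_add {E : Type*} [NormedAddCommGroup E] [InnerProductSpace ℝ E]
    {m : ℝ} (hm : 0 < m) (u h : E) :
    -(‖u‖ ^ 2 / (2 * m)) ≤ ⟪u, h⟫ + m / 2 * ‖h‖ ^ 2 := by
  have hcs := neg_le_of_abs_le (abs_real_inner_le_norm u h)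
  rw [neg_le, neg_add', le_div_iff₀ (by positivity)]
  nlinarith [sq_nonneg (m * ‖h‖ - ‖u‖)]

section Smooth
variable {E : Type*} [NormedAddCommGroup E] [InnerProductSpace ℝ E] [CompleteSpace E]
  {f : E → ℝ} {x : E}

theorem StrongConvexOn.add_inner_gradient_le {m : ℝ} (hf : StrongConvexOn Set.univ m f)
    (hx : DifferentiableAt ℝ f x) (v : E) :
    f x + ⟪∇ f x, v⟫ + m / 2 * ‖v‖ ^ 2 ≤ f (x + v) := by
  have hφ := (strongConvexOn_iff_convex.1 hf).add_le_of_hasFDerivAt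
    (hx.hasFDerivAt.sub ((hasStrictFDerivAt_norm_sq x).hasFDerivAt.const_mul (m / 2))) v
  simp only [sub_apply, ← inner_gradient_left, smul_apply, coe_innerSL_apply, nsmul_eq_mul,
    Nat.cast_ofNat, smul_eq_mul, norm_add_sq_real] at hφ
  linarith

theorem StrongConvexOn.sub_le_norm_gradient_sq {m : ℝ} (hf : StrongConvexOn Set.univ m f)
    (hm : 0 < m) (hx : DifferentiableAt ℝ f x) (y : E) :
    f x - f y ≤ ‖∇ f x‖ ^ 2 / (2 * m) := by
  have hy := hf.add_inner_gradient_le hx (y - x)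
  rw [add_sub_cancel] at hy
  linarith [neg_norm_sq_div_le_inner_add hm (∇ f x) (y - x)]

theorem apply_add_le_of_lipschitzWith_gradient {L : NNReal} (hf : Differentiable ℝ f)
    (hL : LipschitzWith L (∇ f)) (x v : E) :
    f (x + v) ≤ f x + ⟪∇ f x, v⟫ + L / 2 * ‖v‖ ^ 2 := by
  set ψ : ℝ → ℝ := fun t => f (x + t • v) - t * ⟪∇ f x, v⟫ - L / 2 * t ^ 2 * ‖v‖ ^ 2
  have hψ : ∀ t, HasDerivAt ψ (⟪∇ f (x + t • v) - ∇ f x, v⟫ - L * t * ‖v‖ ^ 2) t := by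
    intro t
    refine HasDerivAt.congr_deriv
      (((hasDerivAt_apply_add_smul (x := x) (v := v) (hf (x + t • v)).hasFDerivAt).sub
        ((hasDerivAt_id t).mul_const ⟪∇ f x, v⟫)).sub
        (((hasDerivAt_pow 2 t).const_mul (L / 2 : ℝ)).mul_const (‖v‖ ^ 2))) ?_
    simp only [inner_sub_left, inner_gradient_left]
    ring
  have hψ_nonpos : ∀ t ∈ interior (Set.Icc (0 : ℝ) 1), deriv ψ t ≤ 0 := by
    intro t ht
    rw [interior_Icc] at ht
    rw [(hψ t).deriv, sub_nonpos]
    calc ⟪∇ f (x + t • v) - ∇ f x, v⟫ ≤ ‖∇ f (x + t • v) - ∇ f x‖ * ‖v‖ :=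
          real_inner_le_norm _ _
      _ ≤ L * ‖t • v‖ * ‖v‖ := by
          gcongr
          simpa [dist_eq_norm] using hL.dist_le_mul (x + t • v) x
      _ = L * t * ‖v‖ ^ 2 := by rw [norm_smul, Real.norm_of_nonneg ht.1.le]; ring
  have hanti := antitoneOn_of_deriv_nonpos (convex_Icc 0 1)
    (fun t _ => (hψ t).continuousAt.continuousWithinAt)
    (fun t _ => (hψ t).differentiableAt.differentiableWithinAt) hψ_nonpos
  have h01 := hanti (Set.left_mem_Icc.2 zero_le_one) (Set.right_mem_Icc.2 zero_le_one) zero_le_one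
  simp only [ψ, zero_smul, add_zero, one_smul, zero_mul, one_mul, sub_zero, one_pow, mul_one,
    ne_eq, OfNat.ofNat_ne_zero, not_false_eq_true, zero_pow, mul_zero] at h01
  linarith

end Smooth

section Average
variable {ι E : Type*} [Fintype ι]

theorem norm_card_inv_smul_sum_sq_le [SeminormedAddCommGroup E] [NormedSpace ℝ E] (h : ι → E) :
    ‖(Fintype.card ι : ℝ)⁻¹ • ∑ i, h i‖ ^ 2 ≤ (Fintype.card ι : ℝ)⁻¹ * ∑ i, ‖h i‖ ^ 2 := by
  have hcauchy := sq_sum_le_card_mul_sum_sq (s := Finset.univ) (f := fun i => ‖h i‖)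
  rw [Finset.card_univ] at hcauchy
  calc ‖(Fintype.card ι : ℝ)⁻¹ • ∑ i, h i‖ ^ 2
      = (Fintype.card ι : ℝ)⁻¹ ^ 2 * ‖∑ i, h i‖ ^ 2 := by
        rw [norm_smul, mul_pow, Real.norm_of_nonneg (by positivity)]
    _ ≤ (Fintype.card ι : ℝ)⁻¹ ^ 2 * (Fintype.card ι * ∑ i, ‖h i‖ ^ 2) := by
        gcongr
        exact (pow_le_pow_left₀ (norm_nonneg _) (norm_sum_le _ _) 2).trans hcauchy
    _ ≤ (Fintype.card ι : ℝ)⁻¹ * ∑ i, ‖h i‖ ^ 2 := by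
        rcases eq_or_ne (Fintype.card ι : ℝ) 0 with h0 | h0
        · simp [h0]
        · rw [sq, mul_assoc, inv_mul_cancel_left₀ h0]

theorem LipschitzWith.card_inv_smul_sum [PseudoMetricSpace E] {F : Type*}
    [SeminormedAddCommGroup F] [NormedSpace ℝ F] {K : NNReal} {g : ι → E → F}
    (hg : ∀ i, LipschitzWith K (g i)) :
    LipschitzWith K (fun x => (Fintype.card ι : ℝ)⁻¹ • ∑ i, g i x) := by
  refine LipschitzWith.of_dist_le_mul fun x y => ?_
  rw [dist_eq_norm, ← smul_sub, ← Finset.sum_sub_distrib, norm_smul,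
    Real.norm_of_nonneg (by positivity)]
  calc (Fintype.card ι : ℝ)⁻¹ * ‖∑ i, (g i x - g i y)‖
      ≤ (Fintype.card ι : ℝ)⁻¹ * ∑ _i : ι, K * dist x y := by
        gcongr
        refine (norm_sum_le _ _).trans (Finset.sum_le_sum fun i _ => ?_)
        rw [← dist_eq_norm]
        exact (hg i).dist_le_mul x y
    _ ≤ K * dist x y := by
        rw [Finset.sum_const, Finset.card_univ, nsmul_eq_mul, ← mul_assoc]
        rcases eq_or_ne (Fintype.card ι : ℝ) 0 with h0 | h0
        · rw [h0, inv_zero, zero_mul, zero_mul]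
          positivity
        · rw [inv_mul_cancel₀ h0, one_mul]

theorem StrongConvexOn.card_inv_mul_sum [Nonempty ι] [NormedAddCommGroup E] [NormedSpace ℝ E]
    {s : Set E} {m : ℝ} {f : ι → E → ℝ} (hf : ∀ i, StrongConvexOn s m (f i)) :
    StrongConvexOn s m (fun x => (Fintype.card ι : ℝ)⁻¹ * ∑ i, f i x) := by
  refine ⟨(hf (Classical.arbitrary ι)).1, fun x hx y hy a b ha hb hab => ?_⟩
  have hsum := Finset.sum_le_sum fun i (_ : i ∈ Finset.univ) => (hf i).2 hx hy ha hb hab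
  simp only [Finset.sum_sub_distrib, Finset.sum_add_distrib, Finset.sum_const,
    Finset.card_univ, nsmul_eq_mul, smul_eq_mul, ← Finset.mul_sum] at hsum ⊢
  have hcard : (Fintype.card ι : ℝ)⁻¹ * Fintype.card ι = 1 :=
    inv_mul_cancel₀ (Nat.cast_ne_zero.2 Fintype.card_ne_zero)
  have := mul_le_mul_of_nonneg_left hsum (inv_nonneg.2 (Nat.cast_nonneg (Fintype.card ι)))
  linear_combination this - (a * b * (m / 2 * ‖x - y‖ ^ 2)) * hcard

theorem hasGradientAt_const_mul_sum [NormedAddCommGroup E] [InnerProductSpace ℝ E]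
    [CompleteSpace E] {f : ι → E → ℝ} {x : E} (c : ℝ) (hf : ∀ i, DifferentiableAt ℝ (f i) x) :
    HasGradientAt (fun y => c * ∑ i, f i y) (c • ∑ i, ∇ (f i) x) x := by
  rw [hasGradientAt_iff_hasFDerivAt, map_smulₛₗ, map_sum]
  exact (HasFDerivAt.fun_sum fun i _ => (hf i).hasGradientAt).const_mul c

end Average

section LocalSurrogate
variable {E : Type*} [NormedAddCommGroup E] [InnerProductSpace ℝ E] [CompleteSpace E]

/-- The paper's local subproblem `G_k(w, h)`, written with `u = ξ ∇F(w)`. -/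
noncomputable def localSurrogate (f : E → ℝ) (w u h : E) : ℝ :=
  f (w + h) - ⟪∇ f w - u, h⟫

variable {f : E → ℝ} {w u : E}

@[simp]
theorem localSurrogate_zero : localSurrogate f w u 0 = f w := by
  simp [localSurrogate]

theorem StrongConvexOn.add_inner_le_localSurrogate {m : ℝ} (hf : StrongConvexOn Set.univ m f)
    (hw : DifferentiableAt ℝ f w) (h : E) :
    f w + ⟪u, h⟫ + m / 2 * ‖h‖ ^ 2 ≤ localSurrogate f w u h := by
  have := hf.add_inner_gradient_le hw h
  rw [localSurrogate, inner_sub_left]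
  linarith

theorem StrongConvexOn.bddBelow_localSurrogate {m : ℝ} (hf : StrongConvexOn Set.univ m f)
    (hm : 0 < m) (hw : DifferentiableAt ℝ f w) :
    BddBelow (Set.range (localSurrogate f w u)) := by
  refine ⟨f w - ‖u‖ ^ 2 / (2 * m), Set.forall_mem_range.2 fun h => ?_⟩
  linarith [hf.add_inner_le_localSurrogate (u := u) hw h, neg_norm_sq_div_le_inner_add hm u h]

theorem iInf_localSurrogate_le {L : NNReal} (hL : 0 < L) (hf : Differentiable ℝ f)
    (hlip : LipschitzWith L (∇ f)) (hbdd : BddBelow (Set.range (localSurrogate f w u))) :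
    ⨅ h, localSurrogate f w u h ≤ f w - ‖u‖ ^ 2 / (2 * L) := by
  refine (ciInf_le hbdd (-(L : ℝ)⁻¹ • u)).trans ?_
  have hdesc := apply_add_le_of_lipschitzWith_gradient hf hlip w (-(L : ℝ)⁻¹ • u)
  rw [localSurrogate, inner_sub_left]
  simp only [inner_smul_right, real_inner_self_eq_norm_sq, norm_smul, norm_neg, norm_inv,
    NNReal.norm_eq, mul_pow] at hdesc ⊢
  have hL' : (L : ℝ) ≠ 0 := by positivity
  field_simp at hdesc ⊢
  linarith

theorem inner_add_le_of_localSurrogate_le {m η : ℝ} {L : NNReal} {h : E}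
    (hf : Differentiable ℝ f) (hsc : StrongConvexOn Set.univ m f) (hm : 0 < m)
    (hlip : LipschitzWith L (∇ f)) (hL : 0 < L) (hη : η ≤ 1)
    (happrox : localSurrogate f w u h - ⨅ h', localSurrogate f w u h'
      ≤ η * (localSurrogate f w u 0 - ⨅ h', localSurrogate f w u h')) :
    ⟪u, h⟫ + m / 2 * ‖h‖ ^ 2 ≤ -((1 - η) * (‖u‖ ^ 2 / (2 * L))) := by
  have hinf := iInf_localSurrogate_le (u := u) hL hf hlip (hsc.bddBelow_localSurrogate hm (hf w))
  have hlow := hsc.add_inner_le_localSurrogate (u := u) (hf w) h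
  rw [localSurrogate_zero] at happrox
  nlinarith [mul_le_mul_of_nonneg_left hinf (sub_nonneg.2 hη)]

end LocalSurrogate

section GlobalStep
variable {ι E : Type*} [Fintype ι] [Nonempty ι] [NormedAddCommGroup E] [InnerProductSpace ℝ E]
  [CompleteSpace E] {F : E → ℝ} {L : NNReal}

theorem apply_add_card_inv_smul_sum_le (hF : Differentiable ℝ F) (hlip : LipschitzWith L (∇ F))
    (w : E) (h : ι → E) {D : ℝ} (hh : ∀ i, ⟪∇ F w, h i⟫ + L / 2 * ‖h i‖ ^ 2 ≤ -D) :
    F (w + (Fintype.card ι : ℝ)⁻¹ • ∑ i, h i) ≤ F w - D := by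
  have hdesc :=
    apply_add_le_of_lipschitzWith_gradient hF hlip w ((Fintype.card ι : ℝ)⁻¹ • ∑ i, h i)
  have hjensen := norm_card_inv_smul_sum_sq_le h
  have hsum := Finset.sum_le_sum fun i (_ : i ∈ Finset.univ) => hh i
  rw [Finset.sum_add_distrib, ← Finset.mul_sum, Finset.sum_const, Finset.card_univ,
    nsmul_eq_mul] at hsum
  rw [inner_smul_right, inner_sum] at hdesc
  have hcard : (Fintype.card ι : ℝ)⁻¹ * Fintype.card ι = 1 :=
    inv_mul_cancel₀ (Nat.cast_ne_zero.2 Fintype.card_ne_zero)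
  calc F (w + (Fintype.card ι : ℝ)⁻¹ • ∑ i, h i)
      ≤ F w + (Fintype.card ι : ℝ)⁻¹ * (∑ i, ⟪∇ F w, h i⟫ + L / 2 * ∑ i, ‖h i‖ ^ 2) := by
        nlinarith [mul_le_mul_of_nonneg_left hjensen (by positivity : (0 : ℝ) ≤ L / 2)]
    _ ≤ F w + (Fintype.card ι : ℝ)⁻¹ * (Fintype.card ι * -D) := by gcongr
    _ = F w - D := by rw [← mul_assoc, hcard]; ring

theorem StrongConvexOn.sub_le_one_sub_mul_of_localSurrogate {f : ι → E → ℝ} {m ξ η : ℝ}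
    (hf : ∀ i, Differentiable ℝ (f i)) (hsc : ∀ i, StrongConvexOn Set.univ m (f i))
    (hlip : ∀ i, LipschitzWith L (∇ (f i))) (hF : Differentiable ℝ F)
    (hFsc : StrongConvexOn Set.univ m F) (hFlip : LipschitzWith L (∇ F)) (hm : 0 < m)
    (hL : 0 < L) (hξ : 0 < ξ) (hξL : ξ * L ≤ m) (hη : η ≤ 1) (w wstar : E) (h : ι → E)
    (happrox : ∀ i, localSurrogate (f i) w (ξ • ∇ F w) (h i)
        - ⨅ h', localSurrogate (f i) w (ξ • ∇ F w) h'
      ≤ η * (localSurrogate (f i) w (ξ • ∇ F w) 0 - ⨅ h', localSurrogate (f i) w (ξ • ∇ F w) h')) :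
    F (w + (Fintype.card ι : ℝ)⁻¹ • ∑ i, h i) - F wstar
      ≤ (1 - (1 - η) * ξ * m / L) * (F w - F wstar) := by
  set g := ∇ F w
  have hlocal : ∀ i, ⟪g, h i⟫ + L / 2 * ‖h i‖ ^ 2 ≤ -((1 - η) * ξ * ‖g‖ ^ 2 / (2 * L)) := by
    intro i
    have hi := inner_add_le_of_localSurrogate_le (hf i) (hsc i) hm (hlip i) hL hη (happrox i)
    rw [real_inner_smul_left, norm_smul, Real.norm_of_nonneg hξ.le] at hi
    have hquad : ξ * (L / 2 * ‖h i‖ ^ 2) ≤ m / 2 * ‖h i‖ ^ 2 := by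
      rw [← mul_assoc, mul_div_assoc']
      gcongr
    rw [← mul_le_mul_iff_of_pos_left hξ]
    have hL' : (L : ℝ) ≠ 0 := by positivity
    field_simp at hi ⊢
    nlinarith
  have hdesc := apply_add_card_inv_smul_sum_le hF hFlip w h hlocal
  have hPL := hFsc.sub_le_norm_gradient_sq hm (hF w) wstar
  have hrate : (1 - η) * ξ * m / L * (F w - F wstar) ≤ (1 - η) * ξ * ‖g‖ ^ 2 / (2 * L) :=
    calc (1 - η) * ξ * m / L * (F w - F wstar)
        ≤ (1 - η) * ξ * m / L * (‖g‖ ^ 2 / (2 * m)) := by gcongr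
      _ = (1 - η) * ξ * ‖g‖ ^ 2 / (2 * L) := by field_simp
  linarith

end GlobalStep

theorem le_exp_neg_mul_of_le_one_sub_mul {e : ℕ → ℝ} {θ : ℝ} (he0 : ∀ n, 0 ≤ e n)
    (he : ∀ n, e (n + 1) ≤ (1 - θ) * e n) (n : ℕ) : e n ≤ Real.exp (-(θ * n)) * e 0 := by
  induction n with
  | zero => simp
  | succ n ih =>
    calc e (n + 1) ≤ (1 - θ) * e n := he n
      _ ≤ Real.exp (-θ) * (Real.exp (-(θ * n)) * e 0) :=
          mul_le_mul (Real.one_sub_le_exp_neg θ) ih (he0 n) (Real.exp_pos _).le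
      _ = Real.exp (-(θ * ↑(n + 1))) * e 0 := by
          rw [← mul_assoc, ← Real.exp_add]; push_cast; ring_nf

theorem exp_neg_mul_le_of_div_mul_log_le {θ c ε t : ℝ} (hθ : 0 < θ) (hc : 1 ≤ c) (hε0 : 0 < ε)
    (hε1 : ε ≤ 1) (ht : c / θ * Real.log (1 / ε) ≤ t) : Real.exp (-(θ * t)) ≤ ε := by
  have hlog : 0 ≤ Real.log (1 / ε) := Real.log_nonneg (one_le_one_div hε0 hε1)
  have hθt : Real.log (1 / ε) ≤ θ * t :=
    calc Real.log (1 / ε) ≤ c * Real.log (1 / ε) := le_mul_of_one_le_left hlog hc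
      _ = θ * (c / θ * Real.log (1 / ε)) := by field_simp
      _ ≤ θ * t := by gcongr
  rw [one_div, Real.log_inv] at hθt
  calc Real.exp (-(θ * t)) ≤ Real.exp (Real.log ε) := Real.exp_le_exp.2 (by linarith)
    _ = ε := Real.exp_log hε0

theorem le_mul_of_le_one_sub_mul {e : ℕ → ℝ} {θ c ε : ℝ} (he0 : ∀ n, 0 ≤ e n)
    (he : ∀ n, e (n + 1) ≤ (1 - θ) * e n) (hθ : 0 < θ) (hc : 1 ≤ c) (hε0 : 0 < ε) (hε1 : ε ≤ 1)
    {n : ℕ} (hn : c / θ * Real.log (1 / ε) ≤ n) : e n ≤ ε * e 0 :=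
  (le_exp_neg_mul_of_le_one_sub_mul he0 he n).trans <|
    mul_le_mul_of_nonneg_right (exp_neg_mul_le_of_div_mul_log_le hθ hc hε0 hε1 hn) (he0 0)

theorem fl_global_convergence_general {d K : ℕ} (hK : 0 < K) (γ L : ℝ) (hγ : 0 < γ) (hγL : γ ≤ L)
    (F : Fin K → EuclideanSpace ℝ (Fin d) → ℝ)
    (hF2 : ∀ k, ContDiff ℝ 2 (F k))
    (hsc : ∀ k, StrongConvexOn Set.univ γ (F k))
    (hlip : ∀ k, LipschitzWith L.toNNReal (gradient (F k)))
    (Fglob : EuclideanSpace ℝ (Fin d) → ℝ)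
    (hFglob : Fglob = fun w => (K : ℝ)⁻¹ * ∑ k, F k w)
    (wstar : EuclideanSpace ℝ (Fin d))
    (hwstar : ∀ w, Fglob wstar ≤ Fglob w)
    (ξ η : ℝ) (hξ0 : 0 < ξ) (hξ : ξ ≤ γ / L) (hη1 : η < 1)
    (w : ℕ → EuclideanSpace ℝ (Fin d))
    (h : ℕ → Fin K → EuclideanSpace ℝ (Fin d))
    (G : ℕ → Fin K → EuclideanSpace ℝ (Fin d) → ℝ)
    (hG : ∀ n k hk, G n k hk =
      F k (w n + hk) - (inner ℝ (gradient (F k) (w n) - ξ • gradient Fglob (w n)) hk : ℝ))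
    (hupd : ∀ n, w (n + 1) = w n + (K : ℝ)⁻¹ • ∑ k, h n k)
    (happrox : ∀ n k,
      G n k (h n k) - ⨅ hh, G n k hh ≤ η * (G n k 0 - ⨅ hh, G n k hh))
    (ε : ℝ) (hε0 : 0 < ε) (hε1 : ε < 1)
    (n : ℕ)
    (hn : 2 * L ^ 2 / (γ ^ 2 * ξ * (1 - η)) * Real.log (1 / ε) ≤ (n : ℝ)) :
    Fglob (w n) - Fglob wstar ≤ ε * (Fglob (w 0) - Fglob wstar) := by
  have hL : 0 < L := hγ.trans_le hγL
  have hLcoe : (L.toNNReal : ℝ) = L := Real.coe_toNNReal L hL.le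
  have hdiff : ∀ k, Differentiable ℝ (F k) := fun k => (hF2 k).differentiable two_ne_zero
  have : Nonempty (Fin K) := ⟨⟨0, hK⟩⟩
  replace hFglob : Fglob = fun x => (Fintype.card (Fin K) : ℝ)⁻¹ * ∑ k, F k x := by
    rwa [Fintype.card_fin]
  have hgrad : ∀ x, HasGradientAt Fglob ((Fintype.card (Fin K) : ℝ)⁻¹ • ∑ k, ∇ (F k) x) x :=
    fun x => hFglob ▸ hasGradientAt_const_mul_sum _ fun k => hdiff k x
  have hFlip : LipschitzWith L.toNNReal (∇ Fglob) :=
    gradient_eq hgrad ▸ LipschitzWith.card_inv_smul_sum hlip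
  have hstep : ∀ m, Fglob (w (m + 1)) - Fglob wstar
      ≤ (1 - (1 - η) * ξ * γ / L) * (Fglob (w m) - Fglob wstar) := by
    intro m
    have hGm : ∀ k, G m k = localSurrogate (F k) (w m) (ξ • ∇ Fglob (w m)) :=
      fun k => funext (hG m k)
    have := StrongConvexOn.sub_le_one_sub_mul_of_localSurrogate hdiff hsc hlip
      (fun x => (hgrad x).differentiableAt) (hFglob ▸ StrongConvexOn.card_inv_mul_sum hsc) hFlip
      hγ (Real.toNNReal_pos.2 hL) hξ0 (by rw [hLcoe]; exact (le_div_iff₀ hL).1 hξ) hη1.le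
      (w m) wstar (h m) (fun k => by simpa only [hGm] using happrox m k)
    rwa [Fintype.card_fin, ← hupd, hLcoe] at this
  have hθ : 0 < (1 - η) * ξ * γ / L := by
    have := sub_pos.2 hη1
    positivity
  refine le_mul_of_le_one_sub_mul (fun m => sub_nonneg.2 (hwstar _)) hstep hθ
    (c := 2 * L / γ) (by rw [le_div_iff₀ hγ]; linarith) hε0 hε1.le ?_
  convert hn using 2
  field_simp

/-- **Lemma 1** (convergence rate of the federated learning algorithm): with `K` users whose
local losses `F k` are `γ`-strongly convex with `L`-Lipschitz gradient, if each user solves its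
local subproblem `G n k` to relative accuracy `η` and the server averages the updates, then after
`n ≥ 2L²/(γ²ξ(1-η)) · ln(1/ε)` global iterations the global loss gap shrinks by a factor `ε`. -/
theorem fl_global_convergence {d K : ℕ} (hK : 0 < K) (γ L : ℝ) (hγ : 0 < γ) (hγL : γ ≤ L)
    (F : Fin K → EuclideanSpace ℝ (Fin d) → ℝ)
    (hF2 : ∀ k, ContDiff ℝ 2 (F k))
    (hsc : ∀ k, StrongConvexOn Set.univ γ (F k))
    (hlip : ∀ k, LipschitzWith L.toNNReal (gradient (F k)))
    (Fglob : EuclideanSpace ℝ (Fin d) → ℝ)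
    (hFglob : Fglob = fun w => (K : ℝ)⁻¹ * ∑ k, F k w)
    (wstar : EuclideanSpace ℝ (Fin d))
    (hwstar : ∀ w, Fglob wstar ≤ Fglob w)
    (ξ η : ℝ) (hξ0 : 0 < ξ) (hξ : ξ ≤ γ / L) (hη0 : 0 ≤ η) (hη1 : η < 1)
    (w : ℕ → EuclideanSpace ℝ (Fin d))
    (h : ℕ → Fin K → EuclideanSpace ℝ (Fin d))
    (G : ℕ → Fin K → EuclideanSpace ℝ (Fin d) → ℝ)
    (hG : ∀ n k hk, G n k hk =
      F k (w n + hk) - (inner ℝ (gradient (F k) (w n) - ξ • gradient Fglob (w n)) hk : ℝ))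
    (hupd : ∀ n, w (n + 1) = w n + (K : ℝ)⁻¹ • ∑ k, h n k)
    (happrox : ∀ n k,
      G n k (h n k) - ⨅ hh, G n k hh ≤ η * (G n k 0 - ⨅ hh, G n k hh))
    (ε : ℝ) (hε0 : 0 < ε) (hε1 : ε < 1)
    (n : ℕ)
    (hn : 2 * L ^ 2 / (γ ^ 2 * ξ * (1 - η)) * Real.log (1 / ε) ≤ (n : ℝ)) :
    Fglob (w n) - Fglob wstar ≤ ε * (Fglob (w 0) - Fglob wstar) :=
  fl_global_convergence_general hK γ L hγ hγL F hF2 hsc hlip Fglob hFglob wstar hwstar ξ η hξ0 hξ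
    hη1 w h G hG hupd happrox ε hε0 hε1 n hn
end

section
/- Fix c > 0 and let u_c : (0, c/ln 2) → (0,∞) be the inverse function of z_c(b) = b·log₂(1 + c/b), i.e. u_c(z_c(b)) = b for all b > 0. Given positive constants T, a, A, f and s, define φ : (0,1) → ℝ by φ(η) = (1−η)·T/a + (A/f)·log₂ η, and on the set S = {η ∈ (0,1) : φ(η) > 0} define v(η) = s/φ(η). Then the set D = {η ∈ S : v(η) < c/ln 2} is convex, and the composite function η ↦ u_c(v(η)) is convex on D. -/
/-!
The rate `b ↦ b log₂ (1 + c / b)` lies below each of its tangent lines (this is `log x ≤ x - 1`)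
and their slopes are positive, so it is concave and strictly increasing on `(0, ∞)`; by continuity
it takes every value in `(0, c / log 2)`. Its inverse `u` is therefore increasing and convex there.
Since `φ` is concave, `v = s / φ` is convex where `φ > 0`, so its sublevel set `D` is convex, and
the increasing convex `u` composed with the convex `v` is convex.
-/

open Real Set Filter Topology

section TangentLines

variable {𝕜 : Type*} [Field 𝕜] [LinearOrder 𝕜] [IsStrictOrderedRing 𝕜] {s : Set 𝕜} {f d : 𝕜 → 𝕜}

theorem concaveOn_of_le_tangent (hs : Convex 𝕜 s)
    (hf : ∀ x ∈ s, ∀ y ∈ s, f y ≤ f x + d x * (y - x)) : ConcaveOn 𝕜 s f := by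
  refine ⟨hs, fun x hx y hy p q hp hq hpq => ?_⟩
  set m := p • x + q • y
  have hm : m ∈ s := hs hx hy hp hq hpq
  calc p • f x + q • f y ≤ p * (f m + d m * (x - m)) + q * (f m + d m * (y - m)) := by
        simp only [smul_eq_mul]
        gcongr
        exacts [hf m hm x hx, hf m hm y hy]
    _ = f m := by
        simp only [m, smul_eq_mul]
        linear_combination (f m - d m * (p * x + q * y)) * hpq

theorem strictMonoOn_of_le_tangent (hd : ∀ x ∈ s, 0 < d x)
    (hf : ∀ x ∈ s, ∀ y ∈ s, f y ≤ f x + d x * (y - x)) : StrictMonoOn f s := by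
  intro x hx y hy hxy
  have := mul_neg_of_pos_of_neg (hd y hy) (sub_neg.2 hxy)
  linarith [hf y hy x hx]

end TangentLines

theorem StrictMonoOn.monotoneOn_of_leftInvOn {α β : Type*} [LinearOrder α] [Preorder β]
    {s : Set α} {g : α → β} {u : β → α} (hg : StrictMonoOn g s) (hu : LeftInvOn u g s) :
    MonotoneOn u (g '' s) := by
  rintro _ ⟨x, hx, rfl⟩ _ ⟨y, hy, rfl⟩ hxy
  rw [hu hx, hu hy]
  exact (hg.le_iff_le hx hy).1 hxy

theorem ConcaveOn.convexOn_of_leftInvOn {𝕜 E β : Type*} [Semiring 𝕜] [PartialOrder 𝕜]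
    [AddCommMonoid E] [LinearOrder E] [SMul 𝕜 E] [AddCommMonoid β] [PartialOrder β] [SMul 𝕜 β]
    {s : Set E} {t : Set β} {g : E → β} {u : β → E}
    (hg : ConcaveOn 𝕜 s g) (hg_mono : StrictMonoOn g s)
    (hu : LeftInvOn u g s) (ht : Convex 𝕜 t) (hts : t ⊆ g '' s) : ConvexOn 𝕜 t u := by
  refine ⟨ht, fun y₁ hy₁ y₂ hy₂ p q hp hq hpq => ?_⟩
  obtain ⟨x₁, hx₁, rfl⟩ := hts hy₁
  obtain ⟨x₂, hx₂, rfl⟩ := hts hy₂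
  obtain ⟨x, hx, hgx⟩ := hts (ht hy₁ hy₂ hp hq hpq)
  have hmix : p • x₁ + q • x₂ ∈ s := hg.1 hx₁ hx₂ hp hq hpq
  rw [← hgx, hu hx, hu hx₁, hu hx₂]
  exact (hg_mono.le_iff_le hx hmix).1 (hgx.trans_le (hg.2 hx₁ hx₂ hp hq hpq))

theorem ConvexOn.comp_of_mapsTo {𝕜 E β γ : Type*} [Semiring 𝕜] [PartialOrder 𝕜]
    [AddCommMonoid E] [AddCommMonoid β] [PartialOrder β] [AddCommMonoid γ] [PartialOrder γ]
    [SMul 𝕜 E] [Module 𝕜 β] [Module 𝕜 γ] {s : Set E} {t : Set β} {f : E → β} {g : β → γ}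
    (hg : ConvexOn 𝕜 t g) (hf : ConvexOn 𝕜 s f) (hst : MapsTo f s t) (hg_mono : MonotoneOn g t) :
    ConvexOn 𝕜 s (g ∘ f) :=
  ⟨hf.1, fun _ hx _ hy _ _ ha hb hab =>
    (hg_mono (hst (hf.1 hx hy ha hb hab)) (hg.1 (hst hx) (hst hy) ha hb hab)
      (hf.2 hx hy ha hb hab)).trans (hg.2 (hst hx) (hst hy) ha hb hab)⟩

theorem ConcaveOn.convexOn_const_div {E : Type*} [AddCommGroup E] [Module ℝ E] {s : Set E}
    {f : E → ℝ} (hf : ConcaveOn ℝ s f) (hf₀ : ∀ x ∈ s, 0 < f x) {k : ℝ} (hk : 0 ≤ k) :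
    ConvexOn ℝ s fun x => k / f x := by
  have hinv : ConvexOn ℝ (Ioi 0) fun y : ℝ => k / y :=
    ((convexOn_zpow (-1)).smul hk).congr fun y _ => by simp [div_eq_mul_inv]
  refine ⟨hf.1, fun x hx y hy p q hp hq hpq => ?_⟩
  have hmix : 0 < p • f x + q • f y := convex_Ioi (0 : ℝ) (hf₀ x hx) (hf₀ y hy) hp hq hpq
  exact (div_le_div_of_nonneg_left hk hmix (hf.2 hx hy hp hq hpq)).trans
    (hinv.2 (hf₀ x hx) (hf₀ y hy) hp hq hpq)

theorem concaveOn_logb_Ioi {b : ℝ} (hb : 1 ≤ b) : ConcaveOn ℝ (Ioi 0) (logb b) :=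
  (strictConcaveOn_log_Ioi.concaveOn.smul (inv_nonneg.2 (log_nonneg hb))).congr fun x _ => by
    simp [logb, div_eq_inv_mul]

theorem div_add_lt_log_one_add_div {c b : ℝ} (hc : 0 < c) (hb : 0 < b) :
    c / (b + c) < log (1 + c / b) := by
  have hbc : 0 < b + c := by positivity
  have h := log_lt_sub_one_of_pos (div_pos hb hbc) (by
    rw [Ne, div_eq_one_iff_eq hbc.ne']; linarith)
  have hinv : b / (b + c) = (1 + c / b)⁻¹ := by field_simp
  rw [hinv, log_inv] at h
  have hsub : (1 + c / b)⁻¹ - 1 = -(c / (b + c)) := by rw [← hinv]; field_simp; ring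
  linarith

/-- The paper's `z_c`. -/
noncomputable def shannonRate (c b : ℝ) : ℝ := b * logb 2 (1 + c / b)

section ShannonRate

variable {c : ℝ}

/-- The slope is the derivative of `shannonRate c` at `b₀`. -/
theorem shannonRate_le_tangent {b₀ b : ℝ} (hc : 0 ≤ c) (hb₀ : 0 < b₀) (hb : 0 < b) :
    shannonRate c b ≤
      shannonRate c b₀ + (log (1 + c / b₀) - c / (b₀ + c)) / log 2 * (b - b₀) := by
  have key := log_le_sub_one_of_pos (by positivity : 0 < (1 + c / b) / (1 + c / b₀))
  rw [log_div (by positivity) (by positivity)] at key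
  have hnat : b * log (1 + c / b) ≤
      b₀ * log (1 + c / b₀) + (log (1 + c / b₀) - c / (b₀ + c)) * (b - b₀) := by
    calc b * log (1 + c / b)
        = b * (log (1 + c / b) - log (1 + c / b₀)) + b * log (1 + c / b₀) := by ring
      _ ≤ b * ((1 + c / b) / (1 + c / b₀) - 1) + b * log (1 + c / b₀) := by gcongr
      _ = _ := by field_simp; ring
  calc shannonRate c b = b * log (1 + c / b) / log 2 := mul_div_assoc' ..
    _ ≤ (b₀ * log (1 + c / b₀) + (log (1 + c / b₀) - c / (b₀ + c)) * (b - b₀)) / log 2 := by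
        gcongr
    _ = _ := by simp only [shannonRate, logb]; ring

theorem shannonRate_concaveOn (hc : 0 ≤ c) : ConcaveOn ℝ (Ioi 0) (shannonRate c) :=
  concaveOn_of_le_tangent (convex_Ioi 0) fun _ hb₀ _ hb => shannonRate_le_tangent hc hb₀ hb

theorem shannonRate_strictMonoOn (hc : 0 < c) : StrictMonoOn (shannonRate c) (Ioi 0) :=
  strictMonoOn_of_le_tangent
    (fun _ hb => div_pos (sub_pos.2 (div_add_lt_log_one_add_div hc hb)) (log_pos one_lt_two))
    fun _ hb₀ _ hb => shannonRate_le_tangent hc.le hb₀ hb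

theorem Ioo_subset_image_shannonRate (hc : 0 < c) :
    Ioo 0 (c / log 2) ⊆ shannonRate c '' Ioi 0 := by
  rintro r ⟨hr₀, hr⟩
  have hlim : Tendsto (shannonRate c) atTop (𝓝 (c / log 2)) := by
    show Tendsto (fun b => b * logb 2 (1 + c / b)) _ _
    simpa only [logb, mul_div_assoc] using
      (tendsto_mul_log_one_add_div_atTop c).div_const (log 2)
  obtain ⟨b₂, hb₂r, hb₂⟩ := ((hlim.eventually (lt_mem_nhds hr)).and (eventually_gt_atTop 0)).exists
  -- the continuous extension of `shannonRate c` to `b = 0`, where it vanishes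
  set F := fun b : ℝ => (b * log (b + c) - b * log b) / log 2
  have hF : ∀ b > 0, F b = shannonRate c b := by
    intro b hb
    simp only [F, shannonRate, logb]
    rw [one_add_div hb.ne', log_div (by positivity) hb.ne']
    ring
  have hFcont : ContinuousOn F (Icc 0 b₂) := by
    refine ContinuousOn.div_const (ContinuousOn.sub ?_ continuous_mul_log.continuousOn) _
    exact continuousOn_id.mul ((continuous_add_const c).continuousOn.log
      fun b hb => (by linarith [hb.1] : 0 < b + c).ne')
  obtain ⟨b, hb, hFb⟩ := intermediate_value_Icc hb₂.le hFcont
    ⟨by simpa [F] using hr₀.le, (hF b₂ hb₂).symm ▸ hb₂r.le⟩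
  have hb_pos : 0 < b := hb.1.lt_of_ne <| by
    rintro rfl
    simp only [F, zero_mul, sub_self, zero_div] at hFb
    linarith
  exact ⟨b, hb_pos, (hF b hb_pos).symm.trans hFb⟩

end ShannonRate

theorem u_comp_v_convexOn_general (c : ℝ) (hc : 0 < c) (u : ℝ → ℝ)
    (hu : ∀ b : ℝ, 0 < b → u (b * Real.logb 2 (1 + c / b)) = b)
    (T a A f s : ℝ) (hA : 0 < A) (hf : 0 < f) (hs : 0 < s) :
    Convex ℝ {η : ℝ | η ∈ Set.Ioo (0 : ℝ) 1 ∧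
      0 < (1 - η) * T / a + A / f * Real.logb 2 η ∧
      s / ((1 - η) * T / a + A / f * Real.logb 2 η) < c / Real.log 2} ∧
    ConvexOn ℝ {η : ℝ | η ∈ Set.Ioo (0 : ℝ) 1 ∧
        0 < (1 - η) * T / a + A / f * Real.logb 2 η ∧
        s / ((1 - η) * T / a + A / f * Real.logb 2 η) < c / Real.log 2}
      (fun η : ℝ => u (s / ((1 - η) * T / a + A / f * Real.logb 2 η))) := by
  set φ : ℝ → ℝ := fun η => (1 - η) * T / a + A / f * logb 2 η
  have haffine : ConcaveOn ℝ (Ioo 0 1) fun η : ℝ => (1 - η) * T / a :=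
    ⟨convex_Ioo 0 1, fun x _ y _ p q _ _ hpq => le_of_eq <| by
      simp only [smul_eq_mul]; linear_combination T / a * hpq⟩
  have hφ : ConcaveOn ℝ (Ioo 0 1) φ := haffine.add <|
    ((concaveOn_logb_Ioi one_le_two).subset Ioo_subset_Ioi_self (convex_Ioo 0 1)).smul
      (div_pos hA hf).le
  set S := {η ∈ Ioo (0 : ℝ) 1 | 0 < φ η}
  have hv : ConvexOn ℝ S fun η => s / φ η :=
    (hφ.subset (sep_subset _ _) (hφ.convex_gt 0)).convexOn_const_div (fun _ hη => hη.2) hs.le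
  have hD : Convex ℝ {η | η ∈ Ioo 0 1 ∧ 0 < φ η ∧ s / φ η < c / log 2} := by
    simpa only [S, sep_ofPred, and_assoc] using hv.convex_lt (c / log 2)
  have hu_convex : ConvexOn ℝ (Ioo 0 (c / log 2)) u :=
    (shannonRate_concaveOn hc.le).convexOn_of_leftInvOn (shannonRate_strictMonoOn hc) hu
      (convex_Ioo _ _) (Ioo_subset_image_shannonRate hc)
  have hu_mono : MonotoneOn u (Ioo 0 (c / log 2)) :=
    ((shannonRate_strictMonoOn hc).monotoneOn_of_leftInvOn hu).mono
      (Ioo_subset_image_shannonRate hc)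
  exact ⟨hD, hu_convex.comp_of_mapsTo (hv.subset (fun _ hη => ⟨hη.1, hη.2.1⟩) hD)
    (fun _ hη => ⟨div_pos hs hη.2.1, hη.2.2⟩) hu_mono⟩

/-- **Lemma 5**: let `u_c` be the inverse of the rate function `z_c(b) = b · log₂(1 + c/b)`,
`φ(η) = (1-η)T/a + (A/f)·log₂ η` and `v(η) = s/φ(η)`. Then the set
`D = {η ∈ (0,1) : φ(η) > 0 and v(η) < c/ln 2}` is convex and `η ↦ u_c(v(η))` is convex on `D`. -/
theorem u_comp_v_convexOn (c : ℝ) (hc : 0 < c) (u : ℝ → ℝ)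
    (hu : ∀ b : ℝ, 0 < b → u (b * Real.logb 2 (1 + c / b)) = b)
    (T a A f s : ℝ) (hT : 0 < T) (ha : 0 < a) (hA : 0 < A) (hf : 0 < f) (hs : 0 < s) :
    Convex ℝ {η : ℝ | η ∈ Set.Ioo (0 : ℝ) 1 ∧
      0 < (1 - η) * T / a + A / f * Real.logb 2 η ∧
      s / ((1 - η) * T / a + A / f * Real.logb 2 η) < c / Real.log 2} ∧
    ConvexOn ℝ {η : ℝ | η ∈ Set.Ioo (0 : ℝ) 1 ∧
        0 < (1 - η) * T / a + A / f * Real.logb 2 η ∧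
        s / ((1 - η) * T / a + A / f * Real.logb 2 η) < c / Real.log 2}
      (fun η : ℝ => u (s / ((1 - η) * T / a + A / f * Real.logb 2 η))) :=
  u_comp_v_convexOn_general c hc u hu T a A f s hA hf hs
end
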